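/- arXiv:2505.08185 — 4 statements merged into one kernel-verified Lean document; each statement's English description precedes it below -/
import Mathlib

section
/- Let G be a finite 3-connected simple graph and let S be a 3-cut of G. If G − S consists of k components where k ≥ 4, then G contains at least k(k−1)/2 contractible non-edges. -/
/-!
For components `C ≠ D` of `G − S` and `u ∈ C`, `v ∈ D`, the non-edge `uv` is contractible. A set
of fewer than three vertices of `G / uv` either avoids the merged vertex, and then comes from a set
of fewer than three vertices of `G`, or contains it, and then comes from a set `{u, v, t}`. And
`G − {u, v, t}` is connected: a component of `G − S` avoiding `u, v, t` (there are at least four)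
links all vertices of `S − t`, since every vertex of the 3-cut `S` has a neighbour in every
component; and a vertex of a component `E` reaches `S − t` along a path avoiding
`(E ∪ S) ∩ {u, v, t}`, a set of at most two vertices because `E` cannot contain both `u` and `v`.
Picking one vertex in each of the `k` components yields `k(k−1)/2` contractible non-edges.
-/

open SimpleGraph

variable {V : Type*}

/-- A graph is `k`-connected: it has at least `k+1` vertices, and removing any set of
fewer than `k` vertices leaves a connected graph. -/
def KConnected (k : ℕ) (G : SimpleGraph V) : Prop :=
  k + 1 ≤ Nat.card V ∧ ∀ S : Set V, S.ncard < k → (G.induce Sᶜ).Connected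

/-- Contraction of the non-edge `{u, v}`: `u` and `v` are replaced by a single
vertex (represented here by `u`), adjacent to every vertex that was adjacent to
`u` or to `v`. -/
def contractNonEdge (G : SimpleGraph V) (u v : V) : SimpleGraph {w : V // w ≠ v} where
  Adj a b := a ≠ b ∧ (G.Adj a.1 b.1 ∨ (a.1 = u ∧ G.Adj v b.1) ∨ (b.1 = u ∧ G.Adj a.1 v))
  symm := by
    constructor
    rintro a b ⟨hab, h | ⟨h1, h2⟩ | ⟨h1, h2⟩⟩
    · exact ⟨hab.symm, Or.inl h.symm⟩
    · exact ⟨hab.symm, Or.inr (Or.inr ⟨h1, h2.symm⟩)⟩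
    · exact ⟨hab.symm, Or.inr (Or.inl ⟨h1, h2.symm⟩)⟩
  loopless := ⟨fun a h => h.1 rfl⟩

/-- `{u, v}` is a contractible non-edge of `G`: a non-edge whose contraction yields
a `3`-connected graph. -/
def IsContractibleNonEdge (G : SimpleGraph V) (u v : V) : Prop :=
  u ≠ v ∧ ¬ G.Adj u v ∧ KConnected 3 (contractNonEdge G u v)

/-- The set of contractible non-edges of `G`, as unordered pairs of vertices. -/
def contractibleNonEdges (G : SimpleGraph V) : Set (Sym2 V) :=
  {p | ∃ u v : V, p = s(u, v) ∧ IsContractibleNonEdge G u v}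

/-- `S` is a cut of `G`: deleting the vertices of `S` leaves a disconnected graph. -/
def IsCutSet (G : SimpleGraph V) (S : Set V) : Prop :=
  ¬ (G.induce Sᶜ).Preconnected

/-- `C` is the vertex set of a (connected) component of `G − S`. -/
def IsCompOf (G : SimpleGraph V) (S : Set V) (C : Set V) : Prop :=
  C.Nonempty ∧ C ⊆ Sᶜ ∧ (G.induce C).Connected ∧
    ∀ x ∈ C, ∀ y, y ∉ S → G.Adj x y → y ∈ C

namespace SimpleGraph

variable {W : Type*} {G : SimpleGraph V}

lemma exists_walk_support_subset_of_preconnected_induce {s : Set V}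
    (h : (G.induce s).Preconnected) {x y : V} (hx : x ∈ s) (hy : y ∈ s) :
    ∃ p : G.Walk x y, ∀ z ∈ p.support, z ∈ s := by
  obtain ⟨p, hp⟩ := (Subgraph.preconnected_iff_forall_exists_walk_subgraph _).1
    (preconnected_induce_iff.1 h) hx hy
  exact ⟨p, fun z hz => hp.1 (p.mem_verts_toSubgraph.2 hz)⟩

lemma Walk.exists_adj_exit {U s : Set V} {x y : V} (p : G.Walk x y)
    (hp : ∀ z ∈ p.support, z ∈ s) (hx : x ∈ U) (hy : y ∉ U) :
    ∃ a b, G.Adj a b ∧ b ∉ U ∧ b ∈ s ∧ ∃ q : G.Walk x a, ∀ z ∈ q.support, z ∈ U ∩ s := by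
  induction p with
  | nil => exact absurd hx hy
  | @cons x m y hxm p ih =>
    have hxs : x ∈ s := hp x p.support.mem_cons_self
    have hps : ∀ z ∈ p.support, z ∈ s := fun z hz => hp z (List.mem_cons_of_mem _ hz)
    by_cases hm : m ∈ U
    · obtain ⟨a, b, hab, hbU, hbs, q, hq⟩ := ih hps hm hy
      refine ⟨a, b, hab, hbU, hbs, .cons hxm q, ?_⟩
      simpa [Walk.support_cons, hx, hxs] using hq
    · exact ⟨x, m, hxm, hm, hps m p.start_mem_support, .nil, by simp [hx, hxs]⟩

lemma Connected.induce_of_preimage {H : SimpleGraph W} (f : G →g H)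
    (hf : Function.Surjective f) {s : Set W} (h : (G.induce (f ⁻¹' s)).Connected) :
    (H.induce s).Connected := by
  refine h.map (induceHom f (Set.mapsTo_preimage f s)) ?_
  rintro ⟨y, hy⟩
  obtain ⟨x, rfl⟩ := hf y
  exact ⟨⟨x, hy⟩, rfl⟩

end SimpleGraph

lemma choose_two_ncard_le_ncard_of_pairwise {α : Type*} [Finite α] {R : Set α}
    {P : Set (Sym2 α)} (h : R.Pairwise fun x y => s(x, y) ∈ P) :
    R.ncard.choose 2 ≤ P.ncard := by
  classical
  have := Fintype.ofFinite α
  rw [Set.ncard_eq_toFinset_card', ← Sym2.card_image_offDiag, Set.ncard_eq_toFinset_card']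
  refine Finset.card_le_card fun p hp => ?_
  obtain ⟨⟨x, y⟩, hxy, rfl⟩ := Finset.mem_image.1 hp
  simp only [Finset.mem_offDiag, Set.mem_toFinset] at hxy
  simpa using h hxy.1 hxy.2.1 hxy.2.2

section Components

variable {G : SimpleGraph V} {S C D : Set V}

lemma IsCompOf.subset_of_mem (hC : IsCompOf G S C) (hD : IsCompOf G S D) {x : V}
    (hxC : x ∈ C) (hxD : x ∈ D) : C ⊆ D := by
  intro y hyC
  by_contra hyD
  obtain ⟨p, hp⟩ := exists_walk_support_subset_of_preconnected_induce
    hC.2.2.1.preconnected hxC hyC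
  obtain ⟨a, b, hab, hbD, hbC, q, hq⟩ := p.exists_adj_exit hp hxD hyD
  exact hbD (hD.2.2.2 a (hq a q.end_mem_support).1 b (hC.2.1 hbC) hab)

lemma IsCompOf.eq_of_mem (hC : IsCompOf G S C) (hD : IsCompOf G S D) {x : V}
    (hxC : x ∈ C) (hxD : x ∈ D) : C = D :=
  (hC.subset_of_mem hD hxC hxD).antisymm (hD.subset_of_mem hC hxD hxC)

lemma exists_isCompOf_mem {x : V} (hx : x ∉ S) : ∃ C, IsCompOf G S C ∧ x ∈ C := by
  classical
  set C := {y | ∃ p : G.Walk x y, ∀ z ∈ p.support, z ∉ S}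
  have hxC : x ∈ C := ⟨.nil, by simpa using hx⟩
  refine ⟨C, ⟨⟨x, hxC⟩, fun y ⟨p, hp⟩ => hp y p.end_mem_support, ?_, ?_⟩, hxC⟩
  · refine induce_connected_of_patches x hxC fun {y} ⟨p, hp⟩ => ⟨{z | z ∈ p.support},
      fun z hz => ⟨p.takeUntil z hz, fun w hw => hp w (p.support_takeUntil_subset_support hz hw)⟩,
      p.start_mem_support, p.end_mem_support, p.connected_induce_support.preconnected _ _⟩
  · rintro y ⟨p, hp⟩ z hz hyz
    refine ⟨p.concat hyz, fun w hw => ?_⟩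
    rw [Walk.support_concat, List.mem_append, List.mem_singleton] at hw
    rcases hw with hw | rfl
    exacts [hp w hw, hz]

lemma exists_isCompOf_disjoint [Finite V] {X : Set V}
    (hX : X.ncard < {C | IsCompOf G S C}.ncard) : ∃ C, IsCompOf G S C ∧ Disjoint C X := by
  obtain ⟨C₀, hC₀⟩ := Set.nonempty_of_ncard_ne_zero (Nat.ne_zero_of_lt hX)
  obtain ⟨x, -⟩ := hC₀.1
  have : Nonempty V := ⟨x⟩
  by_contra! h
  simp only [Set.not_disjoint_iff_nonempty_inter] at h
  choose! f hf using h
  refine hX.not_ge (Set.ncard_le_ncard_of_injOn f (fun C hC => (hf C hC).2) ?_ X.toFinite)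
  exact fun C hC D hD h => hC.eq_of_mem hD (hf C hC).1 (h ▸ (hf D hD).1)

lemma IsCompOf.exists_adj_of_mem_cut [Finite V] {k : ℕ} (hG : KConnected k G)
    (hS : S.ncard = k) (hC : IsCompOf G S C) (hD : IsCompOf G S D) (hCD : C ≠ D) {s : V}
    (hs : s ∈ S) : ∃ c ∈ C, G.Adj s c := by
  obtain ⟨c, hc⟩ := hC.1
  obtain ⟨d, hd⟩ := hD.1
  have hconn := hG.2 (S \ {s}) (hS ▸ Set.ncard_sdiff_singleton_lt_of_mem hs)
  obtain ⟨p, hp⟩ := exists_walk_support_subset_of_preconnected_induce hconn.preconnected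
    (fun h => hC.2.1 hc h.1) (fun h => hD.2.1 hd h.1)
  obtain ⟨a, b, hab, hbC, hbS, q, hq⟩ :=
    p.exists_adj_exit hp hc fun h => hCD (hC.eq_of_mem hD h hd)
  have haC : a ∈ C := (hq a q.end_mem_support).1
  have hbs : b = s := by
    by_contra hbs
    exact hbC (hC.2.2.2 a haC b (fun h => hbS ⟨h, hbs⟩) hab)
  exact ⟨a, haC, hbs ▸ hab.symm⟩

theorem connected_induce_compl_of_isCompOf [Finite V] (hG : KConnected 3 G) (hS : S.ncard = 3)
    (hk : 4 ≤ {C | IsCompOf G S C}.ncard) (hC : IsCompOf G S C) (hD : IsCompOf G S D)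
    (hCD : C ≠ D) {u v : V} (hu : u ∈ C) (hv : v ∈ D) {R : Set V} (hR : R.ncard ≤ 1) :
    (G.induce (insert u (insert v R))ᶜ).Connected := by
  set T := insert u (insert v R)
  have huS : u ∉ S := hC.2.1 hu
  have hvS : v ∉ S := hD.2.1 hv
  have hT : T.ncard ≤ 3 :=
    (Set.ncard_insert_le _ _).trans (by have := Set.ncard_insert_le v R; omega)
  obtain ⟨E₀, hE₀, hE₀T⟩ := exists_isCompOf_disjoint (G := G) (S := S) (X := T) (by omega)
  obtain ⟨e₀, he₀⟩ := hE₀.1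
  have hE₀T' : E₀ ⊆ Tᶜ := hE₀T.subset_compl_right
  have hCE₀ : C ≠ E₀ := fun h => hE₀T' (h ▸ hu) (Set.mem_insert u _)
  have hSE₀ : ∀ s ∈ S, (G.induce (E₀ ∪ {s})).Connected := fun s hs => by
    obtain ⟨e, he, hse⟩ := hE₀.exists_adj_of_mem_cut hG hS hC hCE₀.symm hs
    exact connected_induce_union hE₀.2.2.1.preconnected Preconnected.of_subsingleton he rfl
      hse.symm
  refine induce_connected_of_patches e₀ (hE₀T' he₀) fun {w} hwT => ?_
  suffices ∃ P ⊆ Tᶜ, e₀ ∈ P ∧ w ∈ P ∧ (G.induce P).Connected by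
    obtain ⟨P, hPT, he₀P, hwP, hP⟩ := this
    exact ⟨P, hPT, he₀P, hwP, hP.preconnected _ _⟩
  by_cases hwS : w ∈ S
  · exact ⟨E₀ ∪ {w}, Set.union_subset hE₀T' (Set.singleton_subset_iff.2 hwT), Or.inl he₀,
      Or.inr rfl, hSE₀ w hwS⟩
  obtain ⟨E, hE, hwE⟩ := exists_isCompOf_mem hwS
  set A := T ∩ (E ∪ S)
  have hA : A.ncard < 3 := by
    obtain ⟨y, hyT, hyES⟩ : ∃ y ∈ T, y ∉ E ∪ S := by
      by_cases huE : u ∈ E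
      · refine ⟨v, by simp [T], fun h => hCD ?_⟩
        exact (hC.eq_of_mem hE hu huE).trans (hE.eq_of_mem hD (h.resolve_right hvS) hv)
      · exact ⟨u, Set.mem_insert u _, fun h => huE (h.resolve_right huS)⟩
    calc A.ncard ≤ (T \ {y}).ncard :=
          Set.ncard_le_ncard fun z hz => ⟨hz.1, fun h => hyES (h ▸ hz.2)⟩
      _ < T.ncard := Set.ncard_sdiff_singleton_lt_of_mem hyT
      _ ≤ 3 := hT
  obtain ⟨s, hsS, hsT⟩ : (S \ T).Nonempty := by
    have hSR : S \ R ⊆ S \ T := by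
      rintro z ⟨hzS, hzR⟩
      refine ⟨hzS, ?_⟩
      rintro (rfl | rfl | hz)
      exacts [huS hzS, hvS hzS, hzR hz]
    have := Set.le_ncard_sdiff R S
    exact Set.nonempty_of_ncard_ne_zero (by have := Set.ncard_le_ncard hSR; omega)
  obtain ⟨p, hp⟩ := exists_walk_support_subset_of_preconnected_induce (hG.2 A hA).preconnected
    (fun h : w ∈ A => hwT h.1) (fun h : s ∈ A => hsT h.1)
  obtain ⟨a, b, hab, hbE, hbA, q, hq⟩ := p.exists_adj_exit hp hwE fun h => hE.2.1 h hsS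
  have hbS : b ∈ S := by
    by_contra h
    exact hbE (hE.2.2.2 a (hq a q.end_mem_support).1 b h hab)
  refine ⟨{z | z ∈ q.support} ∪ (E₀ ∪ {b}), Set.union_subset ?_ ?_, Or.inr (Or.inl he₀),
    Or.inl q.start_mem_support, connected_induce_union q.connected_induce_support.preconnected
      (hSE₀ b hbS).preconnected q.end_mem_support (Or.inr rfl) hab⟩
  · exact fun z hz hzT => (hq z hz).2 ⟨hzT, Or.inl (hq z hz).1⟩
  · exact Set.union_subset hE₀T' (Set.singleton_subset_iff.2 fun h => hbA ⟨h, Or.inr hbS⟩)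

end Components

section Contraction

variable {G : SimpleGraph V} {u v : V}

open Classical in
noncomputable def contractMap (huv : u ≠ v) (w : V) : {w : V // w ≠ v} :=
  if h : w = v then ⟨u, huv⟩ else ⟨w, h⟩

lemma contractMap_self (huv : u ≠ v) : contractMap huv v = ⟨u, huv⟩ := by
  simp [contractMap]

lemma contractMap_of_ne (huv : u ≠ v) {w : V} (hw : w ≠ v) : contractMap huv w = ⟨w, hw⟩ := by
  simp [contractMap, hw]

noncomputable def contractHom (huv : u ≠ v) (hadj : ¬G.Adj u v) : G →g contractNonEdge G u v where
  toFun := contractMap huv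
  map_rel' {a b} hab := by
    rcases eq_or_ne a v with ha | ha <;> rcases eq_or_ne b v with hb | hb
    · exact absurd (ha.trans hb.symm) hab.ne
    · subst a
      rw [contractMap_self, contractMap_of_ne huv hb]
      refine ⟨fun h => hadj ?_, Or.inr (Or.inl ⟨rfl, hab⟩)⟩
      rw [Subtype.mk.inj h]
      exact hab.symm
    · subst b
      rw [contractMap_self, contractMap_of_ne huv ha]
      refine ⟨fun h => hadj ?_, Or.inr (Or.inr ⟨rfl, hab⟩)⟩
      rw [← Subtype.mk.inj h]
      exact hab
    · rw [contractMap_of_ne huv ha, contractMap_of_ne huv hb]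
      exact ⟨fun h => hab.ne (Subtype.mk.inj h), Or.inl hab⟩

lemma contractHom_surjective (huv : u ≠ v) (hadj : ¬G.Adj u v) :
    Function.Surjective (contractHom huv hadj) :=
  fun w => ⟨w.1, contractMap_of_ne huv w.2⟩

lemma ncard_preimage_contractMap_le [Finite V] (huv : u ≠ v) {Y : Set {w : V // w ≠ v}}
    (hY : ⟨u, huv⟩ ∉ Y) : (contractMap huv ⁻¹' Y).ncard ≤ Y.ncard := by
  have hne : ∀ w ∈ contractMap huv ⁻¹' Y, w ≠ v := by
    rintro w hw rfl
    exact hY (contractMap_self huv ▸ hw)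
  refine Set.ncard_le_ncard_of_injOn _ (fun w hw => hw) (fun a ha b hb h => ?_) Y.toFinite
  rw [contractMap_of_ne huv (hne a ha), contractMap_of_ne huv (hne b hb)] at h
  exact Subtype.mk.inj h

lemma preimage_contractMap_of_mem (huv : u ≠ v) {Y : Set {w : V // w ≠ v}}
    (hY : ⟨u, huv⟩ ∈ Y) :
    contractMap huv ⁻¹' Y = insert u (insert v (contractMap huv ⁻¹' (Y \ {⟨u, huv⟩}))) := by
  ext w
  rcases eq_or_ne w v with rfl | hwv
  · simp [contractMap_self, hY]
  rcases eq_or_ne w u with rfl | hwu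
  · simp [contractMap_of_ne huv hwv, hY]
  · simp [contractMap_of_ne huv hwv, hwu, hwv]

theorem kConnected_contractNonEdge [Finite V] {k : ℕ} (hG : KConnected k G) (huv : u ≠ v)
    (hadj : ¬G.Adj u v) (hcard : k + 2 ≤ Nat.card V)
    (hsep : ∀ R : Set V, R.ncard + 1 < k → (G.induce (insert u (insert v R))ᶜ).Connected) :
    KConnected k (contractNonEdge G u v) := by
  refine ⟨?_, fun T hT => ?_⟩
  · have h := Set.ncard_add_ncard_compl ({v} : Set V)
    rw [Set.ncard_singleton] at h
    have : Nat.card {w : V // w ≠ v} = ({v}ᶜ : Set V).ncard := Nat.card_coe_set_eq _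
    omega
  refine Connected.induce_of_preimage (contractHom huv hadj) (contractHom_surjective huv hadj) ?_
  change (G.induce (contractMap huv ⁻¹' Tᶜ)).Connected
  rw [Set.preimage_compl]
  by_cases hu : ⟨u, huv⟩ ∈ T
  · rw [preimage_contractMap_of_mem huv hu]
    refine hsep _ ?_
    calc _ + 1 ≤ (T \ {⟨u, huv⟩}).ncard + 1 := by
          gcongr
          exact ncard_preimage_contractMap_le huv (by simp)
      _ = T.ncard := Set.ncard_sdiff_singleton_add_one hu
      _ < k := hT
  · exact hG.2 _ ((ncard_preimage_contractMap_le huv hu).trans_lt hT)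

end Contraction

section Contractible

variable {G : SimpleGraph V} {S C D : Set V}

theorem isContractibleNonEdge_of_isCompOf [Finite V] (hG : KConnected 3 G) (hS : S.ncard = 3)
    (hk : 4 ≤ {C | IsCompOf G S C}.ncard) (hC : IsCompOf G S C) (hD : IsCompOf G S D)
    (hCD : C ≠ D) {u v : V} (hu : u ∈ C) (hv : v ∈ D) : IsContractibleNonEdge G u v := by
  have hvC : v ∉ C := fun h => hCD (hC.eq_of_mem hD h hv)
  have huv : u ≠ v := fun h => hvC (h ▸ hu)
  have hadj : ¬G.Adj u v := fun h => hvC (hC.2.2.2 u hu v (hD.2.1 hv) h)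
  refine ⟨huv, hadj, kConnected_contractNonEdge hG huv hadj ?_ fun R hR =>
    connected_induce_compl_of_isCompOf hG hS hk hC hD hCD hu hv (by omega)⟩
  have huvS : u ∉ insert v S := by
    rintro (h | h)
    exacts [huv h, hC.2.1 hu h]
  calc 3 + 2 = (insert u (insert v S)).ncard := by
        rw [Set.ncard_insert_of_notMem huvS, Set.ncard_insert_of_notMem (hD.2.1 hv), hS]
    _ ≤ Nat.card V := Set.ncard_le_card _

end Contractible

theorem stmt2_general {V : Type*} [Fintype V] (G : SimpleGraph V) (hG : KConnected 3 G)
    (S : Set V) (hS3 : S.ncard = 3)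
    (k : ℕ) (hk : 4 ≤ k)
    (hcomps : {C : Set V | IsCompOf G S C}.ncard = k) :
    k * (k - 1) / 2 ≤ (contractibleNonEdges G).ncard := by
  have hk' : 4 ≤ {C : Set V | IsCompOf G S C}.ncard := hcomps ▸ hk
  obtain ⟨C₀, hC₀⟩ := Set.nonempty_of_ncard_ne_zero (by omega : {C | IsCompOf G S C}.ncard ≠ 0)
  obtain ⟨x, -⟩ := hC₀.1
  have : Nonempty V := ⟨x⟩
  choose! rep hrep using fun C (hC : IsCompOf G S C) => hC.1
  have hinj : Set.InjOn rep {C | IsCompOf G S C} :=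
    fun C hC D hD h => hC.eq_of_mem hD (hrep C hC) (h ▸ hrep D hD)
  calc k * (k - 1) / 2 = (rep '' {C | IsCompOf G S C}).ncard.choose 2 := by
        rw [hinj.ncard_image, hcomps, Nat.choose_two_right]
    _ ≤ (contractibleNonEdges G).ncard := by
        refine choose_two_ncard_le_ncard_of_pairwise ?_
        rintro _ ⟨C, hC, rfl⟩ _ ⟨D, hD, rfl⟩ hne
        exact ⟨rep C, rep D, rfl, isContractibleNonEdge_of_isCompOf hG hS3 hk' hC hD
          (fun h => hne (h ▸ rfl)) (hrep C hC) (hrep D hD)⟩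

/-- Let `G` be a finite 3-connected graph and `S` a 3-cut of `G`. If `G − S` consists
of `k ≥ 4` components, then `G` contains at least `k(k−1)/2` contractible non-edges. -/
theorem stmt2 {V : Type*} [Fintype V] (G : SimpleGraph V) (hG : KConnected 3 G)
    (S : Set V) (hS3 : S.ncard = 3) (hScut : IsCutSet G S)
    (k : ℕ) (hk : 4 ≤ k)
    (hcomps : {C : Set V | IsCompOf G S C}.ncard = k) :
    k * (k - 1) / 2 ≤ (contractibleNonEdges G).ncard :=
  stmt2_general G hG S hS3 k hk hcomps
end

section
/- Let G be a finite 3-connected simple graph with at least 6 vertices, and let a, b, c be the vertices of a triangle of G with d_G(a) = d_G(b) = 3, say N_G(a) = {b, c, a₁} and N_G(b) = {a, c, b₁}. Then a₁ ≠ b₁, the set {a₁, b₁, c} is a 3-cut of G, and {a, b} is the vertex set of a component of G − {a₁, b₁, c}. -/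
open SimpleGraph

variable {V : Type*}

/-
Since `a` and `b` have degree 3, no edge leaves `{a, b}` except towards
`c`, `a₁`, `b₁`. Hence in `G − S`, for any `S ⊇ {a₁, b₁, c}`, the vertices `a, b` reach
nothing but each other, while at least one vertex outside `{a, b, a₁, b₁, c}` survives
because `G` has at least 6 vertices. Thus such an `S` is a cut. If `a₁ = b₁`, this
gives the 2-cut `{a₁, c}`, which 3-connectivity forbids.
-/

theorem Set.ne_of_ncard_eq_three {α : Type*} {x y z : α} (h : ({x, y, z} : Set α).ncard = 3) :
    x ≠ y ∧ x ≠ z ∧ y ≠ z := by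
  refine ⟨?_, ?_, ?_⟩ <;> rintro rfl <;>
    simp only [mem_insert_iff, mem_singleton_iff, true_or, or_true, insert_eq_of_mem] at h <;>
    exact absurd ((Set.ncard_insert_le _ _).trans_lt (by simp)) h.not_lt

theorem SimpleGraph.Reachable.mem_of_forall_adj_mem {W : Type*} {H : SimpleGraph W} {T : Set W}
    (hT : ∀ x ∈ T, ∀ y, H.Adj x y → y ∈ T) {u v : W} (h : H.Reachable u v) (hu : u ∈ T) :
    v ∈ T := by
  obtain ⟨p⟩ := h
  induction p with
  | nil => exact hu
  | cons hadj _ ih => exact ih (hT _ hu _ hadj)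

theorem isCutSet_of_forall_adj_mem {G : SimpleGraph V} {S C : Set V}
    (hC : ∀ x ∈ C, ∀ y, y ∉ S → G.Adj x y → y ∈ C) {x w : V} (hx : x ∈ C) (hxS : x ∉ S)
    (hw : w ∉ C) (hwS : w ∉ S) : IsCutSet G S := fun hpre =>
  hw <| (hpre ⟨x, hxS⟩ ⟨w, hwS⟩).mem_of_forall_adj_mem (T := {z : ↥Sᶜ | z.1 ∈ C})
    (fun z hz y hzy => hC z.1 hz y.1 y.2 hzy) hx

theorem KConnected.not_isCutSet {k : ℕ} {G : SimpleGraph V} (hG : KConnected k G) {S : Set V}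
    (hS : S.ncard < k) : ¬ IsCutSet G S :=
  fun hcut => hcut (hG.2 S hS).preconnected

theorem forall_adj_mem_pair_of_neighborSet_eq {G : SimpleGraph V} {a b c a1 b1 : V} {S : Set V}
    (hNa : G.neighborSet a = {b, c, a1}) (hNb : G.neighborSet b = {a, c, b1})
    (hc : c ∈ S) (ha1 : a1 ∈ S) (hb1 : b1 ∈ S) :
    ∀ x ∈ ({a, b} : Set V), ∀ y, y ∉ S → G.Adj x y → y ∈ ({a, b} : Set V) := by
  rintro x (rfl | rfl) y hyS hxy
  · have hy : y ∈ G.neighborSet x := hxy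
    rw [hNa] at hy
    rcases hy with rfl | rfl | rfl <;> simp_all
  · have hy : y ∈ G.neighborSet x := hxy
    rw [hNb] at hy
    rcases hy with rfl | rfl | rfl <;> simp_all

theorem stmt13_general {V : Type*} [Fintype V] (G : SimpleGraph V) (hG : KConnected 3 G)
    (h6 : 6 ≤ Fintype.card V)
    (a b c a1 b1 : V)
    (hab : G.Adj a b)
    (hda : (G.neighborSet a).ncard = 3) (hdb : (G.neighborSet b).ncard = 3)
    (hNa : G.neighborSet a = {b, c, a1}) (hNb : G.neighborSet b = {a, c, b1}) :
    a1 ≠ b1 ∧ ({a1, b1, c} : Set V).ncard = 3 ∧ IsCutSet G {a1, b1, c} ∧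
      IsCompOf G {a1, b1, c} {a, b} := by
  classical
  obtain ⟨hbc, hba1, hca1⟩ := Set.ne_of_ncard_eq_three (hNa ▸ hda)
  obtain ⟨hac, hab1, hcb1⟩ := Set.ne_of_ncard_eq_three (hNb ▸ hdb)
  have haa1 : a ≠ a1 := G.ne_of_adj (show a1 ∈ G.neighborSet a by simp [hNa])
  have hbb1 : b ≠ b1 := G.ne_of_adj (show b1 ∈ G.neighborSet b by simp [hNb])
  obtain ⟨w, -, hw⟩ := Finset.exists_mem_notMem_of_card_lt_card
    (s := {a, b, a1, b1, c}) (t := Finset.univ) (Finset.card_le_five.trans_lt (by simpa))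
  simp only [Finset.mem_insert, Finset.mem_singleton, not_or] at hw
  obtain ⟨hwa, hwb, hwa1, hwb1, hwc⟩ := hw
  have ha1b1 : a1 ≠ b1 := by
    rintro rfl
    have hcut : IsCutSet G {a1, c} :=
      isCutSet_of_forall_adj_mem
        (forall_adj_mem_pair_of_neighborSet_eq hNa hNb (by simp) (by simp) (by simp))
        (x := a) (w := w) (by simp) (by simp [haa1, hac]) (by simp [hwa, hwb])
        (by simp [hwa1, hwc])
    exact hG.not_isCutSet ((Set.ncard_insert_le _ _).trans_lt (by simp)) hcut
  have hclosed := forall_adj_mem_pair_of_neighborSet_eq (S := {a1, b1, c}) hNa hNb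
    (by simp) (by simp) (by simp)
  refine ⟨ha1b1, Set.ncard_eq_three.2 ⟨_, _, _, ha1b1, hca1.symm, hcb1.symm, rfl⟩,
    isCutSet_of_forall_adj_mem hclosed (x := a) (w := w) (by simp) ?_ ?_ ?_,
    ⟨⟨a, by simp⟩, ?_, induce_pair_connected_of_adj hab, hclosed⟩⟩
  · simp [haa1, hab1, hac]
  · simp [hwa, hwb]
  · simp [hwa1, hwb1, hwc]
  · rintro x (rfl | rfl) <;> simp [*]

/-- Let `G` be a finite 3-connected graph with at least 6 vertices and let `a, b, c`
be the vertices of a triangle of `G` with `d_G(a) = d_G(b) = 3`, say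
`N_G(a) = {b, c, a₁}` and `N_G(b) = {a, c, b₁}`. Then `a₁ ≠ b₁`, the set
`{a₁, b₁, c}` is a 3-cut of `G`, and `{a, b}` is the vertex set of a component of
`G − {a₁, b₁, c}`. -/
theorem stmt13 {V : Type*} [Fintype V] (G : SimpleGraph V) (hG : KConnected 3 G)
    (h6 : 6 ≤ Fintype.card V)
    (a b c a1 b1 : V)
    (hab : G.Adj a b) (hbc : G.Adj b c) (hac : G.Adj a c)
    (hda : (G.neighborSet a).ncard = 3) (hdb : (G.neighborSet b).ncard = 3)
    (hNa : G.neighborSet a = {b, c, a1}) (hNb : G.neighborSet b = {a, c, b1}) :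
    a1 ≠ b1 ∧ ({a1, b1, c} : Set V).ncard = 3 ∧ IsCutSet G {a1, b1, c} ∧
      IsCompOf G {a1, b1, c} {a, b} :=
  stmt13_general G hG h6 a b c a1 b1 hab hda hdb hNa hNb
end

section
/- For every n ≥ 5, the wheel W_n is a 3-connected graph that contains no contractible non-edge. -/
open SimpleGraph

variable {V : Type*}

/-- The wheel `W n` of order `n`: the cycle `1 - 2 - ⋯ - (n-1) - 1` of order `n-1`,
together with a hub `0` adjacent to all vertices of the cycle. -/
def wheel (n : ℕ) : SimpleGraph (Fin n) :=
  SimpleGraph.fromRel fun a b =>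
    (a.1 = 0 ∧ b.1 ≠ 0) ∨ (a.1 + 1 = b.1 ∧ 1 ≤ a.1) ∨ (a.1 = 1 ∧ b.1 = n - 1)

/-! Deleting two vertices from `W_n` leaves either the hub, which sees every other vertex,
or the rim minus at most one vertex, which is a path; so `W_n` is 3-connected. A non-edge
`{u, v}` consists of two rim vertices that are not consecutive on the rim. Contracting it and
then deleting the merged vertex and the hub leaves the rim minus `u` and `v`: two nonempty
arcs with no edge between them. So the contraction has a 2-cut. -/

theorem Set.exists_subset_pair_of_ncard_le_two {α : Type*} {s : Set α} (hs : s.ncard ≤ 2)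
    (hfin : s.Finite) {a : α} (ha : a ∈ s) : ∃ b, s ⊆ {a, b} := by
  have : Nonempty α := ⟨a⟩
  have hdiff : (s \ {a}).ncard ≤ 1 := by
    rw [Set.ncard_sdiff_singleton_of_mem ha]; omega
  obtain ⟨b, hb⟩ := (Set.ncard_le_one_iff_subset_singleton hfin.sdiff).1 hdiff
  exact ⟨b, (Set.subset_insert_sdiff_singleton a s).trans (Set.insert_subset_insert hb)⟩

namespace SimpleGraph

variable {W : Type*} {G : SimpleGraph W}

theorem not_preconnected_of_adj_closed (P : Set W) (hP : ∀ a b, G.Adj a b → a ∈ P → b ∈ P)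
    {a b : W} (ha : a ∈ P) (hb : b ∉ P) : ¬ G.Preconnected := fun hG =>
  let ⟨p⟩ := hG a b
  let ⟨d, _, hd₁, hd₂⟩ := p.exists_boundary_dart P ha hb
  hd₂ (hP _ _ d.adj hd₁)

theorem induce_preconnected_of_descent {s : Set W} {r : W} (hr : r ∈ s) (f : W → ℕ)
    (hf : ∀ v ∈ s, v ≠ r → ∃ w ∈ s, G.Adj v w ∧ f w < f v) : (G.induce s).Preconnected := by
  suffices h : ∀ v : s, (G.induce s).Reachable v ⟨r, hr⟩ from
    fun u v => (h u).trans (h v).symm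
  rintro ⟨v, hv⟩
  induction h : f v using Nat.strong_induction_on generalizing v with
  | _ k ih =>
    by_cases hvr : v = r
    · subst hvr; rfl
    obtain ⟨w, hw, hvw, hfw⟩ := hf v hv hvr
    exact (Adj.reachable (G := G.induce s) (u := ⟨v, hv⟩) (v := ⟨w, hw⟩) hvw).trans
      (ih (f w) (h ▸ hfw) w hw rfl)

end SimpleGraph

section Contraction

variable {G : SimpleGraph V} {u v : V}

theorem contractNonEdge_adj_of_ne {a b : {x : V // x ≠ v}} (ha : a.1 ≠ u) (hb : b.1 ≠ u) :
    (contractNonEdge G u v).Adj a b ↔ G.Adj a.1 b.1 := by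
  refine ⟨?_, fun h => ⟨fun hab => h.ne (congrArg Subtype.val hab), Or.inl h⟩⟩
  rintro ⟨-, h | ⟨h, -⟩ | ⟨h, -⟩⟩
  exacts [h, absurd h ha, absurd h hb]

/-- Deleting the merged vertex and `w` from `G / {u, v}` leaves `G - {w, u, v}`. -/
theorem IsContractibleNonEdge.induce_compl_preconnected (h : IsContractibleNonEdge G u v)
    {w : V} (hwu : w ≠ u) (hwv : w ≠ v) : (G.induce {w, u, v}ᶜ).Preconnected := by
  obtain ⟨huv, -, -, hconn⟩ := h
  set S : Set {x // x ≠ v} := {⟨w, hwv⟩, ⟨u, huv⟩}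
  have hS : S.ncard < 3 := by
    rw [Set.ncard_pair fun h => hwu (congrArg Subtype.val h)]; omega
  have mem_iff (x : {x // x ≠ v}) : x ∈ Sᶜ ↔ x.1 ∈ ({w, u, v} : Set V)ᶜ := by
    have := x.2
    simp only [S, Set.mem_compl_iff, Set.mem_insert_iff, Set.mem_singleton_iff, Subtype.ext_iff]
    tauto
  let φ : (contractNonEdge G u v).induce Sᶜ →g G.induce {w, u, v}ᶜ :=
    { toFun := fun x => ⟨x.1.1, (mem_iff x.1).1 x.2⟩
      map_rel' := fun {x y} hxy => by
        have hx := (mem_iff x.1).1 x.2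
        have hy := (mem_iff y.1).1 y.2
        simp only [Set.mem_compl_iff, Set.mem_insert_iff, not_or] at hx hy
        exact (contractNonEdge_adj_of_ne hx.2.1 hy.2.1).1 hxy }
  refine (hconn S hS).preconnected.map φ fun y => ?_
  have hyv : y.1 ≠ v := fun h => y.2 (by simp [h])
  exact ⟨⟨⟨y.1, hyv⟩, (mem_iff ⟨y.1, hyv⟩).2 y.2⟩, rfl⟩

end Contraction

section Wheel

variable {n : ℕ}

theorem wheel_adj (a b : Fin n) : (wheel n).Adj a b ↔ a ≠ b ∧
    (a.1 = 0 ∨ b.1 = 0 ∨ (1 ≤ a.1 ∧ a.1 + 1 = b.1) ∨ (1 ≤ b.1 ∧ b.1 + 1 = a.1) ∨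
      (a.1 = 1 ∧ b.1 = n - 1) ∨ (b.1 = 1 ∧ a.1 = n - 1)) := by
  simp only [wheel, fromRel_adj, ne_eq, Fin.ext_iff]
  constructor <;> rintro ⟨hab, h⟩ <;> exact ⟨hab, by omega⟩

theorem val_ne_zero_of_not_wheel_adj {u v : Fin n} (huv : u ≠ v) (h : ¬ (wheel n).Adj u v) :
    u.1 ≠ 0 ∧ v.1 ≠ 0 := by
  rw [wheel_adj] at h
  omega

theorem wheel_induce_preconnected_of_hub_mem {s : Set (Fin n)} {z : Fin n} (hz : z.1 = 0)
    (hzs : z ∈ s) : ((wheel n).induce s).Preconnected :=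
  induce_preconnected_of_descent hzs Fin.val fun v _ hvz =>
    have : v.1 ≠ z.1 := Fin.val_ne_of_ne hvz
    ⟨z, hzs, (wheel_adj v z).2 ⟨hvz, by omega⟩, by omega⟩

theorem wheel_induce_compl_preconnected_of_subset_pair (hn : 3 ≤ n) {s : Set (Fin n)}
    {z m : Fin n} (hz : z.1 = 0) (hzs : z ∈ s) (hs : s ⊆ {z, m}) :
    ((wheel n).induce sᶜ).Preconnected := by
  have mem_compl (x : Fin n) (hx0 : x.1 ≠ 0) (hxm : x.1 ≠ m.1) : x ∈ sᶜ := fun hx => by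
    rcases hs hx with rfl | rfl <;> omega
  have hm := m.isLt
  -- The rim minus `m` is the path `r = m+1, …, n-1, 1, …, m-1`; the potential below is the
  -- position on it, up to a shift.
  obtain ⟨r, hr⟩ : ∃ r : Fin n, r.1 = m.1 + 1 ∨ (m.1 = n - 1 ∧ r.1 = 1) :=
    if h : m.1 + 1 < n then ⟨⟨m.1 + 1, h⟩, Or.inl rfl⟩ else ⟨⟨1, by omega⟩, Or.inr ⟨by omega, rfl⟩⟩
  refine induce_preconnected_of_descent (mem_compl r (by omega) (by omega))
    (fun x => if m.1 < x.1 then x.1 else x.1 + n) fun v hv hvr => ?_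
  have hvr : v.1 ≠ r.1 := Fin.val_ne_of_ne hvr
  have hv0 : v.1 ≠ 0 := fun h => hv (Fin.ext (h.trans hz.symm) ▸ hzs)
  have hvn := v.isLt
  obtain ⟨w, hw⟩ : ∃ w : Fin n, (1 < v.1 ∧ w.1 + 1 = v.1) ∨ (v.1 = 1 ∧ w.1 = n - 1) :=
    if h : 1 < v.1 then ⟨⟨v.1 - 1, by omega⟩, Or.inl ⟨h, by simp only; omega⟩⟩
    else ⟨⟨n - 1, by omega⟩, Or.inr ⟨by omega, rfl⟩⟩
  refine ⟨w, mem_compl w (by omega) (by omega),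
    (wheel_adj v w).2 ⟨Fin.ne_of_val_ne (by omega), by omega⟩, ?_⟩
  split_ifs <;> omega

theorem wheel_kConnected_three (hn : 4 ≤ n) : KConnected 3 (wheel n) := by
  refine ⟨by simpa using hn, fun S hS => ?_⟩
  have hSc : Sᶜ.Nonempty := Set.nonempty_compl.2 fun h => by
    rw [h, Set.ncard_univ, Nat.card_eq_fintype_card, Fintype.card_fin] at hS; omega
  refine (connected_iff _).2 ⟨?_, hSc.to_subtype⟩
  by_cases hzS : (⟨0, by omega⟩ : Fin n) ∈ S
  · obtain ⟨m, hm⟩ := Set.exists_subset_pair_of_ncard_le_two (by omega) S.toFinite hzS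
    exact wheel_induce_compl_preconnected_of_subset_pair (by omega) rfl hzS hm
  · exact wheel_induce_preconnected_of_hub_mem rfl hzS

theorem wheel_induce_compl_not_preconnected {z u v : Fin n} (hz : z.1 = 0) (huv : u ≠ v)
    (hnadj : ¬ (wheel n).Adj u v) : ¬ ((wheel n).induce {z, u, v}ᶜ).Preconnected := by
  have huv' : u.1 ≠ v.1 := Fin.val_ne_of_ne huv
  have hu := u.isLt
  have hv := v.isLt
  rw [wheel_adj, and_iff_right huv] at hnadj
  have mem_compl (k : ℕ) (hk : k < n) (hk0 : k ≠ 0) (hku : k ≠ u.1) (hkv : k ≠ v.1) :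
      (⟨k, hk⟩ : Fin n) ∈ ({z, u, v} : Set (Fin n))ᶜ := by
    simp only [Set.mem_compl_iff, Set.mem_insert_iff, Set.mem_singleton_iff, Fin.ext_iff]
    omega
  -- `u` and `v` cut the rim into two nonempty arcs; the open arc between them is closed.
  refine not_preconnected_of_adj_closed {x | min u.1 v.1 < x.1.1 ∧ x.1.1 < max u.1 v.1}
    (fun ⟨a, ha⟩ ⟨b, hb⟩ hab haP => ?_)
    (a := ⟨_, mem_compl (min u.1 v.1 + 1) (by omega) (by omega) (by omega) (by omega)⟩)
    (by simp only [Set.mem_ofPred_eq]; omega)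
    (b := if h : 1 < min u.1 v.1 then
        ⟨_, mem_compl (min u.1 v.1 - 1) (by omega) (by omega) (by omega) (by omega)⟩
      else ⟨_, mem_compl (max u.1 v.1 + 1) (by omega) (by omega) (by omega) (by omega)⟩)
    (by split_ifs <;> simp only [Set.mem_ofPred_eq] <;> omega)
  simp only [Set.mem_compl_iff, Set.mem_insert_iff, Set.mem_singleton_iff, Fin.ext_iff,
    not_or] at hb
  simp only [comap_adj, Function.Embedding.coe_subtype, wheel_adj] at hab
  simp only [Set.mem_ofPred_eq] at haP ⊢
  omega

theorem wheel_contractibleNonEdges_eq_empty : contractibleNonEdges (wheel n) = ∅ := by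
  refine Set.eq_empty_of_forall_notMem ?_
  rintro - ⟨u, v, -, h⟩
  have hu0 := val_ne_zero_of_not_wheel_adj h.1 h.2.1
  exact wheel_induce_compl_not_preconnected rfl h.1 h.2.1
    (h.induce_compl_preconnected (w := ⟨0, u.pos⟩) (Fin.ne_of_val_ne (Ne.symm hu0.1))
      (Fin.ne_of_val_ne (Ne.symm hu0.2)))

end Wheel

/-- For every `n ≥ 5`, the wheel `W_n` is a 3-connected graph that contains no
contractible non-edge. -/
theorem stmt16 (n : ℕ) (hn : 5 ≤ n) :
    KConnected 3 (wheel n) ∧ contractibleNonEdges (wheel n) = ∅ :=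
  ⟨wheel_kConnected_three (by omega), wheel_contractibleNonEdges_eq_empty⟩
end

section
/- Every 3-connected simple graph on exactly 5 vertices is isomorphic to K₅, to K₅^− (the complete graph on 5 vertices with one edge deleted), or to the wheel W₅. -/
open SimpleGraph

variable {V : Type*}

/-- `K_n^−`: the complete graph on `n` vertices with the edge `{0, 1}` deleted. -/
def Kminus (n : ℕ) : SimpleGraph (Fin n) :=
  SimpleGraph.fromRel fun a b => ¬ (a.1 = 0 ∧ b.1 = 1) ∧ ¬ (a.1 = 1 ∧ b.1 = 0)

/-!
A 3-connected graph has minimum degree at least 3: deleting the neighbourhood of a vertex of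
smaller degree would leave that vertex isolated. On five vertices every vertex therefore misses
at most one other vertex, so the complement is a matching, with 0, 1 or 2 edges. The complements
of these three matchings are `K₅`, `K₅^−` and `W₅`.
-/

open Finset Function

theorem exists_equiv_extending_of_card_eq {α V W : Type*} [Finite α] [Fintype V] [Fintype W]
    (h : Fintype.card W = Fintype.card V) {ι : α → W} (hι : Injective ι) {p : α → V}
    (hp : Injective p) : ∃ e : W ≃ V, ∀ a, e (ι a) = p a := by
  let e₀ := Fintype.equivOfCardEq h
  obtain ⟨σ, hσ⟩ := Equiv.Perm.exists_extending_pair (e₀ ∘ ι) p (e₀.injective.comp hι) hp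
  exact ⟨e₀.trans σ, hσ⟩

namespace SimpleGraph

variable {W : Type*}

theorem KConnected.le_degree {k : ℕ} {G : SimpleGraph V} [Fintype V] [DecidableRel G.Adj]
    (hG : KConnected k G) (v : V) : k ≤ G.degree v := by
  by_contra! hlt
  set S := G.neighborSet v
  have hS : S.ncard = G.degree v := by
    rw [Set.ncard_eq_toFinset_card', ← card_neighborSet_eq_degree, Set.toFinset_card]
  have hSc : 1 < Sᶜ.ncard := by
    have hV := hG.1
    have hsum := Set.ncard_add_ncard_compl S
    omega
  have : Nontrivial (Sᶜ : Set V) := (Set.one_lt_ncard_iff_nontrivial.1 hSc).coe_sort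
  obtain ⟨u, hvu⟩ := (hG.2 S (hS ▸ hlt)).preconnected.exists_adj_of_nontrivial
    ⟨v, G.notMem_neighborSet_self⟩
  exact u.2 hvu

theorem eq_of_adj_of_adj_of_degree_le_one {G : SimpleGraph V} {v a b : V}
    [Fintype (G.neighborSet v)] (hv : G.degree v ≤ 1) (ha : G.Adj v a) (hb : G.Adj v b) :
    a = b :=
  Finset.card_le_one.1 hv a ((mem_neighborFinset _ _ _).2 ha) b ((mem_neighborFinset _ _ _).2 hb)

theorem ne_of_adj_of_adj_of_degree_le_one {G : SimpleGraph V} [Fintype V] [DecidableRel G.Adj]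
    (hG : ∀ v, G.degree v ≤ 1) {a b c d : V} (hab : G.Adj a b) (hcd : G.Adj c d)
    (hne : s(a, b) ≠ s(c, d)) : a ≠ c := by
  rintro rfl
  exact hne (by rw [eq_of_adj_of_adj_of_degree_le_one (hG a) hab hcd])

theorem two_mul_card_edgeFinset_le_card {G : SimpleGraph V} [Fintype V] [DecidableRel G.Adj]
    (hG : ∀ v, G.degree v ≤ 1) : 2 * #G.edgeFinset ≤ Fintype.card V := by
  rw [← sum_degrees_eq_twice_card_edges]
  simpa using Finset.sum_le_sum fun v (_ : v ∈ Finset.univ) => hG v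

theorem eq_bot_or_edge_or_edge_sup_edge_of_degree_le_one {G : SimpleGraph V} [Fintype V]
    [DecidableRel G.Adj] (hV : Fintype.card V ≤ 5) (hG : ∀ v, G.degree v ≤ 1) :
    G = ⊥ ∨ (∃ x y, Injective ![x, y] ∧ G = edge x y) ∨
      ∃ x y z w, Injective ![x, y, z, w] ∧ G = edge x y ⊔ edge z w := by
  classical
  have hE : #G.edgeFinset ≤ 2 := by
    have := two_mul_card_edgeFinset_le_card hG
    omega
  interval_cases h : #G.edgeFinset
  · exact Or.inl (edgeFinset_eq_empty.1 (Finset.card_eq_zero.1 h))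
  · obtain ⟨e, he⟩ := Finset.card_eq_one.1 h
    induction e using Sym2.ind with | h x y => ?_
    have hxy : G.Adj x y := by rw [← mem_edgeSet, ← mem_edgeFinset, he, mem_singleton]
    refine Or.inr (Or.inl ⟨x, y, ?_, ?_⟩)
    · intro i j
      fin_cases i <;> fin_cases j <;> simp [hxy.ne, hxy.ne.symm]
    · rw [← edgeSet_inj, edgeSet_edge_of_ne hxy.ne, ← coe_edgeFinset, he, coe_singleton]
  · obtain ⟨e, f, hef, he⟩ := Finset.card_eq_two.1 h
    induction e using Sym2.ind with | h x y => ?_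
    induction f using Sym2.ind with | h z w => ?_
    have hxy : G.Adj x y := by rw [← mem_edgeSet, ← mem_edgeFinset, he]; simp
    have hzw : G.Adj z w := by rw [← mem_edgeSet, ← mem_edgeFinset, he]; simp
    have hxz := ne_of_adj_of_adj_of_degree_le_one hG hxy hzw hef
    have hxw := ne_of_adj_of_adj_of_degree_le_one hG hxy hzw.symm (by rwa [Sym2.eq_swap (a := w)])
    have hyz := ne_of_adj_of_adj_of_degree_le_one hG hxy.symm hzw (by rwa [Sym2.eq_swap])
    have hyw := ne_of_adj_of_adj_of_degree_le_one hG hxy.symm hzw.symm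
      (by rwa [Sym2.eq_swap, Sym2.eq_swap (a := w)])
    refine Or.inr (Or.inr ⟨x, y, z, w, ?_, ?_⟩)
    · intro i j
      fin_cases i <;> fin_cases j <;> simp [hxy.ne, hzw.ne, hxz, hxw, hyz, hyw, hxy.ne.symm,
        hzw.ne.symm, hxz.symm, hxw.symm, hyz.symm, hyw.symm]
    · rw [← edgeSet_inj, edgeSet_sup, edgeSet_edge_of_ne hxy.ne, edgeSet_edge_of_ne hzw.ne,
        ← coe_edgeFinset, he, coe_pair, Set.singleton_union]

theorem nonempty_iso_of_comap_eq {G : SimpleGraph V} {H : SimpleGraph W} (e : W ≃ V)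
    (h : G.comap e = H) : Nonempty (G ≃g H) :=
  h ▸ ⟨(Iso.comap e G).symm⟩

theorem comap_compl {f : W → V} (hf : Injective f) (G : SimpleGraph V) :
    Gᶜ.comap f = (G.comap f)ᶜ := by
  ext a b
  simp [hf.ne_iff]

theorem comap_sup (f : W → V) (G H : SimpleGraph V) :
    (G ⊔ H).comap f = G.comap f ⊔ H.comap f :=
  rfl

theorem comap_edge {f : W → V} (hf : Injective f) (a b : W) :
    (edge (f a) (f b)).comap f = edge a b := by
  ext c d
  simp [edge_adj, hf.eq_iff, hf.ne_iff]


theorem kminus_five_eq_compl_edge : Kminus 5 = (edge 0 1)ᶜ := by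
  ext a b
  simp only [Kminus, fromRel_adj, compl_adj, edge_adj]
  revert a b
  decide

theorem wheel_five_eq_compl_edge_sup_edge : wheel 5 = (edge 1 3 ⊔ edge 2 4)ᶜ := by
  ext a b
  simp only [wheel, fromRel_adj, compl_adj, sup_adj, edge_adj]
  revert a b
  decide

end SimpleGraph

/-- Every 3-connected graph on exactly 5 vertices is isomorphic to `K₅`, to `K₅^−`,
or to the wheel `W₅`. -/
theorem stmt17 {V : Type*} [Fintype V] (G : SimpleGraph V)
    (h5 : Fintype.card V = 5) (hG : KConnected 3 G) :
    Nonempty (G ≃g (⊤ : SimpleGraph (Fin 5))) ∨ Nonempty (G ≃g Kminus 5) ∨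
      Nonempty (G ≃g wheel 5) := by
  classical
  have hdeg : ∀ v, Gᶜ.degree v ≤ 1 := fun v => by
    have := hG.le_degree v
    rw [degree_compl, h5]
    omega
  have hcard : Fintype.card (Fin 5) = Fintype.card V := (Fintype.card_fin 5).trans h5.symm
  rcases eq_bot_or_edge_or_edge_sup_edge_of_degree_le_one h5.le hdeg with
    hbot | ⟨x, y, hxy, hcompl⟩ | ⟨x, y, z, w, hxyzw, hcompl⟩
  · rw [compl_eq_bot.1 hbot]
    exact Or.inl ⟨Iso.completeGraph (Fintype.equivFinOfCardEq h5)⟩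
  · obtain ⟨e, he⟩ := exists_equiv_extending_of_card_eq hcard (ι := ![0, 1]) (by decide) hxy
    obtain rfl : e 0 = x := he 0
    obtain rfl : e 1 = y := he 1
    refine Or.inr (Or.inl (nonempty_iso_of_comap_eq e ?_))
    rw [kminus_five_eq_compl_edge, ← compl_eq_comm.1 hcompl, comap_compl e.injective,
      comap_edge e.injective]
  · obtain ⟨e, he⟩ :=
      exists_equiv_extending_of_card_eq hcard (ι := ![1, 3, 2, 4]) (by decide) hxyzw
    obtain rfl : e 1 = x := he 0
    obtain rfl : e 3 = y := he 1
    obtain rfl : e 2 = z := he 2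
    obtain rfl : e 4 = w := he 3
    refine Or.inr (Or.inr (nonempty_iso_of_comap_eq e ?_))
    rw [wheel_five_eq_compl_edge_sup_edge, ← compl_eq_comm.1 hcompl, comap_compl e.injective,
      comap_sup, comap_edge e.injective, comap_edge e.injective]
end
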